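/- The product over all primes p congruent to 2 or 3 modulo 5 satisfies ∏_{p ≡ 2,3 mod 5} (p² − 1)/(p² + 1) = 1/√5. -/

import Mathlib

/-!
Let `χ₅` be the quadratic character modulo 5. The Fourier series `∑ cos(2πnx)/n² = π² B₂(x)` on
`[0, 1]`, together with `χ₅(n) = (2/√5) (cos(2πn/5) - cos(4πn/5))`, gives
`L(2, χ₅) = 4π²/(25√5)`, while `L(2, χ₅²) = (1 - 1/25) ζ(2) = 4π²/25`. Dividing the Euler products
of the two `L`-values, the factor `(1 - χ₅(p)² p⁻²)/(1 - χ₅(p) p⁻²)` equals `1` unless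
`χ₅(p) = -1`, i.e. `p ≡ 2, 3 (mod 5)`, where it is `(p² - 1)/(p² + 1)`.
-/

open Real

namespace MonoidWithZeroHom

theorem mul_apply {M₀ N₀ : Type*} [MulZeroOneClass M₀] [CommMonoidWithZero N₀] (f g : M₀ →*₀ N₀)
    (x : M₀) : (f * g) x = f x * g x :=
  rfl

def divNatPow {F : Type*} [Semifield F] (f : ℕ →*₀ F) (k : ℕ) : ℕ →*₀ F where
  toFun n := f n / (n : F) ^ k
  map_zero' := by simp
  map_one' := by simp
  map_mul' m n := by simp only [map_mul, Nat.cast_mul, mul_pow, div_mul_div_comm]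

@[simp]
theorem divNatPow_apply {F : Type*} [Semifield F] (f : ℕ →*₀ F) (k n : ℕ) :
    f.divNatPow k n = f n / (n : F) ^ k :=
  rfl

theorem summable_norm_divNatPow {f : ℕ →*₀ ℝ} (hf : ∀ n, |f n| ≤ 1) {k : ℕ} (hk : 1 < k) :
    Summable (‖f.divNatPow k ·‖) := by
  refine (summable_one_div_nat_pow.mpr hk).of_nonneg_of_le (fun _ ↦ norm_nonneg _) fun n ↦ ?_
  rw [divNatPow_apply, norm_div, norm_pow, norm_natCast, norm_eq_abs]
  gcongr
  exact hf n

end MonoidWithZeroHom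

theorem EulerProduct.hasProd_div_completely_multiplicative {F : Type*} [NormedField F]
    [CompleteSpace F] {f g : ℕ →*₀ F} (hf : Summable (‖f ·‖)) (hg : Summable (‖g ·‖))
    (hg₀ : ∑' n, g n ≠ 0) :
    HasProd (fun p : Nat.Primes ↦ (1 - g p) / (1 - f p)) ((∑' n, f n) / ∑' n, g n) := by
  have := Filter.Tendsto.div (EulerProduct.eulerProduct_completely_multiplicative_hasProd hf)
    (EulerProduct.eulerProduct_completely_multiplicative_hasProd hg) hg₀
  exact this.congr fun s ↦ by simp only [Pi.div_apply, ← Finset.prod_div_distrib, inv_div_inv]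

theorem hasSum_zeta_two_not_dvd {m : ℕ} (hm : m ≠ 0) :
    HasSum (fun n : ℕ ↦ if m ∣ n then 0 else 1 / (n : ℝ) ^ 2)
      ((1 - 1 / (m : ℝ) ^ 2) * (π ^ 2 / 6)) := by
  have hmultiples : HasSum (fun n : ℕ ↦ if m ∣ n then 1 / (n : ℝ) ^ 2 else 0)
      (1 / (m : ℝ) ^ 2 * (π ^ 2 / 6)) := by
    refine (Function.Injective.hasSum_iff (mul_right_injective₀ hm) fun n hn ↦ ?_).mp
      ((hasSum_zeta_two.mul_left (1 / (m : ℝ) ^ 2)).congr_fun fun k ↦ ?_)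
    · exact if_neg fun ⟨k, hk⟩ ↦ hn ⟨k, hk.symm⟩
    · simp only [Function.comp_apply, dvd_mul_right, if_true, Nat.cast_mul]
      ring
  have key : HasSum (fun n : ℕ ↦ if m ∣ n then 0 else 1 / (n : ℝ) ^ 2) _ :=
    (hasSum_zeta_two.sub hmultiples).congr_fun fun n ↦ by split_ifs <;> ring
  convert key using 1
  ring

theorem Real.cos_two_pi_mul_nat_div_eq_mod {N : ℕ} (hN : N ≠ 0) (n : ℕ) :
    cos (2 * π * n / N) = cos (2 * π * (n % N : ℕ) / N) := by
  have h : 2 * π * n / N = 2 * π * (n % N : ℕ) / N + (n / N : ℕ) * (2 * π) := by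
    conv_lhs => rw [← Nat.mod_add_div n N]
    push_cast
    field_simp
  rw [h, cos_add_nat_mul_two_pi]

theorem Real.cos_two_pi_div_five : cos (2 * π / 5) = (√5 - 1) / 4 := by
  rw [show 2 * π / 5 = 2 * (π / 5) by ring, cos_two_mul, cos_pi_div_five]
  nlinarith [sq_sqrt (show (0 : ℝ) ≤ 5 by norm_num)]

theorem Real.cos_four_pi_div_five : cos (4 * π / 5) = -(1 + √5) / 4 := by
  rw [show 4 * π / 5 = π - π / 5 by ring, cos_pi_sub, cos_pi_div_five, neg_div]

theorem Real.cos_two_pi_mul_nat_div_five (n : ℕ) : cos (2 * π * n / 5) =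
    if n % 5 = 0 then 1 else if n % 5 = 1 ∨ n % 5 = 4 then (√5 - 1) / 4 else -(1 + √5) / 4 := by
  have h := cos_two_pi_mul_nat_div_eq_mod (N := 5) (by norm_num) n
  rw [Nat.cast_ofNat] at h
  rw [h]
  have : n % 5 < 5 := Nat.mod_lt _ (by norm_num)
  generalize n % 5 = r at *
  interval_cases r
  · simp
  · rw [show 2 * π * ((1 : ℕ) : ℝ) / 5 = 2 * π / 5 by push_cast; ring, cos_two_pi_div_five]
    norm_num
  · rw [show 2 * π * ((2 : ℕ) : ℝ) / 5 = 4 * π / 5 by push_cast; ring, cos_four_pi_div_five]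
    norm_num
  · rw [show 2 * π * ((3 : ℕ) : ℝ) / 5 = 2 * π - 4 * π / 5 by push_cast; ring, cos_two_pi_sub,
      cos_four_pi_div_five]
    norm_num
  · rw [show 2 * π * ((4 : ℕ) : ℝ) / 5 = 2 * π - 2 * π / 5 by push_cast; ring, cos_two_pi_sub,
      cos_two_pi_div_five]
    norm_num

def χ₅ : MulChar (ZMod 5) ℤ where
  toFun a :=
    match a with
    | 0 => 0
    | 1 | 4 => 1
    | 2 | 3 => -1
  map_one' := rfl
  map_mul' := by decide
  map_nonunit' := by decide

theorem isQuadratic_χ₅ : χ₅.IsQuadratic := by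
  unfold MulChar.IsQuadratic
  decide

theorem χ₅_nat_mod_five (n : ℕ) : χ₅ n = χ₅ (n % 5 : ℕ) := by
  rw [ZMod.natCast_mod]

theorem χ₅_nat_eq_neg_one_iff (n : ℕ) : χ₅ n = -1 ↔ n % 5 = 2 ∨ n % 5 = 3 := by
  rw [χ₅_nat_mod_five]
  have : n % 5 < 5 := Nat.mod_lt _ (by norm_num)
  generalize n % 5 = r at *
  interval_cases r <;> decide

theorem χ₅_nat_sq (n : ℕ) : χ₅ n ^ 2 = if 5 ∣ n then 0 else 1 := by
  have h : ∀ a : ZMod 5, χ₅ a ^ 2 = if a = 0 then 0 else 1 := by decide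
  simp only [h, ZMod.natCast_eq_zero_iff]

theorem cos_sub_cos_eq_sqrt_five_mul_χ₅ (n : ℕ) :
    cos (2 * π * n / 5) - cos (2 * π * (2 * n : ℕ) / 5) = √5 / 2 * χ₅ n := by
  rw [cos_two_pi_mul_nat_div_five, cos_two_pi_mul_nat_div_five, χ₅_nat_mod_five,
    show 2 * n % 5 = 2 * (n % 5) % 5 by omega]
  have : n % 5 < 5 := Nat.mod_lt _ (by norm_num)
  generalize n % 5 = r at *
  interval_cases r <;> norm_num [χ₅] <;> ring

def χ₅ℕ : ℕ →*₀ ℝ where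
  toFun n := χ₅ n
  map_zero' := by simp [χ₅]
  map_one' := by simp
  map_mul' m n := by simp

@[simp]
theorem χ₅ℕ_apply (n : ℕ) : χ₅ℕ n = χ₅ n :=
  rfl

theorem abs_χ₅ℕ_le_one (n : ℕ) : |χ₅ℕ n| ≤ 1 := by
  rcases isQuadratic_χ₅ n with h | h | h <;> simp [h]

theorem abs_χ₅ℕ_mul_self_le_one (n : ℕ) : |(χ₅ℕ * χ₅ℕ) n| ≤ 1 := by
  rw [MonoidWithZeroHom.mul_apply, abs_mul]
  exact mul_le_one₀ (abs_χ₅ℕ_le_one n) (abs_nonneg _) (abs_χ₅ℕ_le_one n)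

theorem hasSum_χ₅ℕ_div_sq : HasSum (χ₅ℕ.divNatPow 2) (4 * π ^ 2 / (25 * √5)) := by
  have hB : ∀ x : ℝ, (Polynomial.map (algebraMap ℚ ℝ) (Polynomial.bernoulli (2 * 1))).eval x =
      x ^ 2 - x + 6⁻¹ := bernoulliFun_two
  have h₁ := hasSum_one_div_nat_pow_mul_cos one_ne_zero (x := 1 / 5) ⟨by norm_num, by norm_num⟩
  have h₂ := hasSum_one_div_nat_pow_mul_cos one_ne_zero (x := 2 / 5) ⟨by norm_num, by norm_num⟩
  have key : HasSum (χ₅ℕ.divNatPow 2) _ := ((h₁.sub h₂).mul_left (2 / √5)).congr_fun fun n ↦ by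
    rw [MonoidWithZeroHom.divNatPow_apply, χ₅ℕ_apply, mul_one, ← mul_sub,
      show 2 * π * n * (1 / 5) = 2 * π * n / 5 by ring,
      show 2 * π * n * (2 / 5) = 2 * π * (2 * n : ℕ) / 5 by push_cast; ring,
      cos_sub_cos_eq_sqrt_five_mul_χ₅]
    field_simp
  convert key using 1
  rw [hB, hB]
  norm_num [Nat.factorial]
  field_simp
  ring

theorem hasSum_χ₅ℕ_mul_self_div_sq : HasSum ((χ₅ℕ * χ₅ℕ).divNatPow 2) (4 * π ^ 2 / 25) := by
  have key : HasSum ((χ₅ℕ * χ₅ℕ).divNatPow 2) _ :=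
    (hasSum_zeta_two_not_dvd (m := 5) (by norm_num)).congr_fun fun n ↦ by
      simp only [MonoidWithZeroHom.divNatPow_apply, MonoidWithZeroHom.mul_apply, χ₅ℕ_apply]
      rw [← Int.cast_mul, ← sq, χ₅_nat_sq]
      split_ifs <;> simp
  convert key using 1
  ring

theorem eulerFactor_χ₅ℕ {p : ℕ} (hp : p.Prime) :
    (1 - (χ₅ℕ * χ₅ℕ).divNatPow 2 p) / (1 - χ₅ℕ.divNatPow 2 p) =
      if p % 5 = 2 ∨ p % 5 = 3 then ((p : ℝ) ^ 2 - 1) / ((p : ℝ) ^ 2 + 1) else 1 := by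
  simp only [MonoidWithZeroHom.divNatPow_apply, MonoidWithZeroHom.mul_apply, χ₅ℕ_apply]
  have hp₀ : (p : ℝ) ≠ 0 := by exact_mod_cast hp.ne_zero
  have hp₂ : (1 : ℝ) < (p : ℝ) ^ 2 := by exact_mod_cast Nat.one_lt_pow two_ne_zero hp.one_lt
  split_ifs with h
  · rw [(χ₅_nat_eq_neg_one_iff p).mpr h]
    push_cast
    rw [neg_one_mul, neg_neg, neg_div, sub_neg_eq_add, one_sub_div (pow_ne_zero 2 hp₀),
      one_add_div (pow_ne_zero 2 hp₀), div_div_div_cancel_right₀ (pow_ne_zero 2 hp₀)]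
  · rcases isQuadratic_χ₅ p with h' | h' | h'
    · simp [h']
    · have hp₁ : (1 : ℝ) / (p : ℝ) ^ 2 ≠ 1 := ((div_lt_one (by positivity)).mpr hp₂).ne
      rw [h']
      push_cast
      rw [one_mul, div_self (sub_ne_zero.mpr hp₁.symm)]
    · exact absurd ((χ₅_nat_eq_neg_one_iff p).mp h') h

theorem mulIndicator_primes_eulerFactor_χ₅ℕ :
    {p : ℕ | p.Prime}.mulIndicator
        (fun n ↦ (1 - (χ₅ℕ * χ₅ℕ).divNatPow 2 n) / (1 - χ₅ℕ.divNatPow 2 n)) =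
      {p : ℕ | p.Prime ∧ (p % 5 = 2 ∨ p % 5 = 3)}.mulIndicator
        fun n ↦ ((n : ℝ) ^ 2 - 1) / ((n : ℝ) ^ 2 + 1) := by
  funext n
  by_cases hn : n.Prime
  · simp only [Set.mulIndicator_apply, Set.mem_ofPred_eq, hn, true_and, if_true]
    exact eulerFactor_χ₅ℕ hn
  · simp [hn]

theorem stmt10 :
    (∏' p : {p : ℕ // p.Prime ∧ (p % 5 = 2 ∨ p % 5 = 3)},
        ((p.1 : ℝ) ^ 2 - 1) / ((p.1 : ℝ) ^ 2 + 1)) = 1 / Real.sqrt 5 := by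
  have hprod := EulerProduct.hasProd_div_completely_multiplicative
    (MonoidWithZeroHom.summable_norm_divNatPow abs_χ₅ℕ_le_one one_lt_two)
    (MonoidWithZeroHom.summable_norm_divNatPow abs_χ₅ℕ_mul_self_le_one one_lt_two)
    (by rw [hasSum_χ₅ℕ_mul_self_div_sq.tsum_eq]; positivity)
  rw [hasSum_χ₅ℕ_div_sq.tsum_eq, hasSum_χ₅ℕ_mul_self_div_sq.tsum_eq,
    show 4 * π ^ 2 / (25 * √5) / (4 * π ^ 2 / 25) = 1 / √5 by field_simp] at hprod
  have key := (hasProd_subtype_iff_mulIndicator (s := {p : ℕ | p.Prime})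
    (f := fun n ↦ (1 - (χ₅ℕ * χ₅ℕ).divNatPow 2 n) / (1 - χ₅ℕ.divNatPow 2 n))).mp hprod
  rw [mulIndicator_primes_eulerFactor_χ₅ℕ, ← hasProd_subtype_iff_mulIndicator] at key
  exact key.tprod_eq
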